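/- Let X be a finite set with |X| = d ≥ 2, and let G ≤ Aut(X*) be a regular weakly branch group over a normal subgroup K ⊴ G. Let 𝒫 be a class of groups, closed under isomorphism, that is preserved under taking finite direct products, quotients and subgroups; a group is called virtually 𝒫 if it contains a subgroup of finite index belonging to 𝒫. Then every proper quotient of G is virtually 𝒫 if and only if G/K' is virtually 𝒫, where K' = [K, K] is the derived subgroup of K. -/

import Mathlib

open Equiv
open scoped commutatorElement

namespace PaperDefs


/-! ### Regular rooted trees `X*` (vertices = finite words = lists) -/

variable (X : Type)

/-- The automorphism group of the regular rooted tree `X*`: permutations of the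
set of finite words preserving the prefix relation. -/
def treeAutL : Subgroup (Perm (List X)) where
  carrier := {g | ∀ v w : List X, v <+: w ↔ g v <+: g w}
  one_mem' := by intro v w; simp
  mul_mem' := by
    intro a b ha hb v w
    simpa [Equiv.Perm.mul_apply] using (hb v w).trans (ha (b v) (b w))
  inv_mem' := by
    intro a ha v w
    simpa using (ha (a⁻¹ v) (a⁻¹ w)).symm

/-- The rigid stabiliser of the vertex `v ∈ X*` in `H`. -/
def ristL (H : Subgroup (Perm (List X))) (v : List X) : Subgroup (Perm (List X)) where
  carrier := {g | g ∈ H ∧ ∀ w, ¬ v <+: w → g w = w}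
  one_mem' := ⟨H.one_mem, fun w _ => by simp⟩
  mul_mem' := by
    rintro a b ⟨haG, ha⟩ ⟨hbG, hb⟩
    refine ⟨H.mul_mem haG hbG, fun w hw => ?_⟩
    simp [Equiv.Perm.mul_apply, hb w hw, ha w hw]
  inv_mem' := by
    rintro a ⟨haG, ha⟩
    refine ⟨H.inv_mem haG, fun w hw => ?_⟩
    conv_lhs => rw [← ha w hw]
    simp

/-- The rigid stabiliser of the `n`-th level. -/
def ristLevelL (H : Subgroup (Perm (List X))) (n : ℕ) : Subgroup (Perm (List X)) :=
  ⨆ (v : List X) (_ : v.length = n), ristL X H v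

/-- Spherically transitive action on `X*`. -/
def SphTransL (G : Subgroup (Perm (List X))) : Prop :=
  ∀ v w : List X, v.length = w.length → ∃ g ∈ G, g v = w

/-- `G ≤ Aut(X*)` is a weakly branch group. -/
def IsWeaklyBranchL (G : Subgroup (Perm (List X))) : Prop :=
  G ≤ treeAutL X ∧ SphTransL X G ∧ ∀ v : List X, ristL X G v ≠ ⊥

/-- `projL X v H = φ_v(St_H(v))`: the image under the projection `φ_v` of the
stabiliser of `v` in `H`, where the subtree at `v` is identified with `X*` itself;
it consists of those `σ` for which some `g ∈ H` satisfies `g (v·w) = v·(σ w)`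
for every word `w`. -/
def projL (v : List X) (H : Subgroup (Perm (List X))) : Subgroup (Perm (List X)) where
  carrier := {σ | ∃ g ∈ H, ∀ w : List X, g (v ++ w) = v ++ σ w}
  one_mem' := ⟨1, H.one_mem, fun w => by simp⟩
  mul_mem' := by
    rintro σ τ ⟨g, hgH, hg⟩ ⟨g', hg'H, hg'⟩
    exact ⟨g * g', H.mul_mem hgH hg'H, fun w => by
      simp [Equiv.Perm.mul_apply, hg' w, hg (τ w)]⟩
  inv_mem' := by
    rintro σ ⟨g, hgH, hg⟩
    refine ⟨g⁻¹, H.inv_mem hgH, fun w => ?_⟩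
    have h1 : g (v ++ σ⁻¹ w) = v ++ w := by
      rw [hg (σ⁻¹ w), Equiv.Perm.coe_inv, Equiv.apply_symm_apply]
    calc g⁻¹ (v ++ w) = g⁻¹ (g (v ++ σ⁻¹ w)) := by rw [h1]
      _ = v ++ σ⁻¹ w := Equiv.symm_apply_apply g _

/-- `G ≤ Aut(X*)` is self-similar: `G_v ≤ G` for every vertex. -/
def SelfSimilarL (G : Subgroup (Perm (List X))) : Prop :=
  ∀ v : List X, projL X v G ≤ G

/-! ### The Basilica group -/

mutual
  /-- The generator `a` of the Basilica group, as a function on words. -/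
  def aF : List Bool → List Bool
    | [] => []
    | false :: w => false :: w
    | true :: w => true :: bF w
  /-- The generator `b` of the Basilica group, as a function on words. -/
  def bF : List Bool → List Bool
    | [] => []
    | false :: w => true :: aF w
    | true :: w => false :: w
end

mutual
  /-- The inverse of `aF`. -/
  def aI : List Bool → List Bool
    | [] => []
    | false :: w => false :: w
    | true :: w => true :: bI w
  /-- The inverse of `bF`. -/
  def bI : List Bool → List Bool
    | [] => []
    | false :: w => true :: w
    | true :: w => false :: aI w
end

mutual
  theorem aI_aF : ∀ w, aI (aF w) = w
    | [] => rfl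
    | false :: _ => rfl
    | true :: w => by simp [aF, aI, bI_bF w]
  theorem bI_bF : ∀ w, bI (bF w) = w
    | [] => rfl
    | false :: w => by simp [bF, bI, aI_aF w]
    | true :: _ => rfl
end

mutual
  theorem aF_aI : ∀ w, aF (aI w) = w
    | [] => rfl
    | false :: _ => rfl
    | true :: w => by simp [aI, aF, bF_bI w]
  theorem bF_bI : ∀ w, bF (bI w) = w
    | [] => rfl
    | false :: _ => by simp [bI, bF]
    | true :: w => by simp [bI, bF, aF_aI w]
end

/-- The generator `a` of the Basilica group. -/
def aP : Perm (List Bool) := ⟨aF, aI, aI_aF, aF_aI⟩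

/-- The generator `b` of the Basilica group. -/
def bP : Perm (List Bool) := ⟨bF, bI, bI_bF, bF_bI⟩

/-- The Basilica group `𝓑 = ⟨a, b⟩ ≤ Aut({0,1}*)`. -/
def BasilicaGroup : Subgroup (Perm (List Bool)) := Subgroup.closure {aP, bP}

/-- The image of a subgroup of the first-level stabiliser under
`ψ₁ = (φ₀, φ₁)`: pairs `(σ₀, σ₁)` arising as the pair of first-level sections of
some `g ∈ H`. -/
def psi1Image (H : Subgroup (Perm (List Bool))) :
    Subgroup (Perm (List Bool) × Perm (List Bool)) where
  carrier := {p | ∃ g ∈ H, ∀ w : List Bool,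
      g (false :: w) = false :: p.1 w ∧ g (true :: w) = true :: p.2 w}
  one_mem' := ⟨1, H.one_mem, fun w => by simp⟩
  mul_mem' := by
    rintro p q ⟨g, hgH, hg⟩ ⟨g', hg'H, hg'⟩
    refine ⟨g * g', H.mul_mem hgH hg'H, fun w => ⟨?_, ?_⟩⟩
    · simp [Equiv.Perm.mul_apply, (hg' w).1, (hg (q.1 w)).1]
    · simp [Equiv.Perm.mul_apply, (hg' w).2, (hg (q.2 w)).2]
  inv_mem' := by
    rintro p ⟨g, hgH, hg⟩
    refine ⟨g⁻¹, H.inv_mem hgH, fun w => ⟨?_, ?_⟩⟩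
    · have h1 : g (false :: p.1⁻¹ w) = false :: w := by
        rw [(hg (p.1⁻¹ w)).1, Equiv.Perm.coe_inv, Equiv.apply_symm_apply]
      have h2 : g⁻¹ (false :: w) = false :: p.1⁻¹ w := by
        rw [← h1, Equiv.Perm.coe_inv, Equiv.symm_apply_apply]
      simpa using h2
    · have h1 : g (true :: p.2⁻¹ w) = true :: w := by
        rw [(hg (p.2⁻¹ w)).2, Equiv.Perm.coe_inv, Equiv.apply_symm_apply]
      have h2 : g⁻¹ (true :: w) = true :: p.2⁻¹ w := by
        rw [← h1, Equiv.Perm.coe_inv, Equiv.symm_apply_apply]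
      simpa using h2

/-! ### Group-theoretic notions -/

/-- `H` is a normal subgroup of `K` (both being subgroups of an ambient group). -/
def NormalIn {P : Type*} [Group P] (H K : Subgroup P) : Prop :=
  H ≤ K ∧ ∀ k ∈ K, ∀ h ∈ H, k * h * k⁻¹ ∈ H

/-- `H` is `k`-subnormal in `G`: there is a chain `H = c k ⊴ ⋯ ⊴ c 0 = G`. -/
def SubnormalIn {P : Type*} [Group P] (H G : Subgroup P) (k : ℕ) : Prop :=
  ∃ c : ℕ → Subgroup P, c 0 = G ∧ c k = H ∧ ∀ i < k, NormalIn (c (i + 1)) (c i)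

/-- The iterated derived subgroup `H⁽ᵏ⁾` of a subgroup `H` of an ambient group. -/
def derivedIter {P : Type*} [Group P] (H : Subgroup P) : ℕ → Subgroup P
  | 0 => H
  | k + 1 => ⁅derivedIter H k, derivedIter H k⁆

/-- The class `𝓜𝓕` of groups all of whose maximal subgroups have finite index. -/
def MF (Γ : Type*) [Group Γ] : Prop :=
  ∀ M : Subgroup Γ, IsCoatom M → M.index ≠ 0

/-- Every proper quotient of `Γ` belongs to `𝓜𝓕`. -/
def QuotientsMF (Γ : Type*) [Group Γ] : Prop :=
  ∀ (N : Subgroup Γ) [N.Normal], N ≠ ⊥ → MF (Γ ⧸ N)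

/-- `H` is a prodense subgroup of `Γ`: `HN = Γ` for every nontrivial normal `N ⊴ Γ`. -/
def Prodense {Γ : Type*} [Group Γ] (H : Subgroup Γ) : Prop :=
  ∀ N : Subgroup Γ, N.Normal → N ≠ ⊥ → H ⊔ N = ⊤

/-- `H` is a prodense subgroup of `G`, both being subgroups of an ambient group:
`H ≤ G` and `HN = G` for every nontrivial subgroup `N ≤ G` normal in `G`. -/
def ProdenseIn {P : Type*} [Group P] (H G : Subgroup P) : Prop :=
  H ≤ G ∧ ∀ N : Subgroup P, N ≤ G → NormalIn N G → N ≠ ⊥ → H ⊔ N = G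

/-- `M` is a maximal subgroup of `G` (both subgroups of an ambient group). -/
def MaximalIn {P : Type*} [Group P] (M G : Subgroup P) : Prop :=
  M < G ∧ ∀ K : Subgroup P, M < K → K ≤ G → K = G

/-! ### Auxiliary lemmas -/

protected theorem Equiv.Perm.apply_inv_self {α : Type*} (f : Perm α) (x : α) :
    f (f⁻¹ x) = x := Equiv.apply_symm_apply f x

protected theorem Equiv.Perm.inv_apply_self {α : Type*} (f : Perm α) (x : α) :
    f⁻¹ (f x) = x := Equiv.symm_apply_apply f x

section Aux

variable {X : Type}

theorem mem_treeAutL {p : Perm (List X)} :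
    p ∈ treeAutL X ↔ ∀ v w : List X, (v <+: w ↔ p v <+: p w) := Iff.rfl

theorem mem_ristL {H : Subgroup (Perm (List X))} {v : List X} {p : Perm (List X)} :
    p ∈ ristL X H v ↔ p ∈ H ∧ ∀ w, ¬ v <+: w → p w = w := Iff.rfl

theorem mem_projL {H : Subgroup (Perm (List X))} {v : List X} {p : Perm (List X)} :
    p ∈ projL X v H ↔ ∃ g ∈ H, ∀ w : List X, g (v ++ w) = v ++ p w := Iff.rfl

theorem nodup_inits : ∀ l : List X, l.inits.Nodup
  | [] => by simp
  | a :: l => by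
    rw [List.inits_cons]
    refine List.nodup_cons.2 ⟨?_, (nodup_inits l).map fun x y h => by injection h⟩
    simp only [List.mem_map]
    rintro ⟨t, -, h⟩
    exact (List.cons_ne_nil a t) h

theorem length_apply {p : Perm (List X)} (hp : p ∈ treeAutL X) (w : List X) :
    (p w).length = w.length := by
  classical
  have key : ∀ q : Perm (List X), q ∈ treeAutL X → ∀ u : List X,
      u.length ≤ (q u).length := by
    intro q hq u
    have hsub : (u.inits.map q).toFinset ⊆ (q u).inits.toFinset := by
      intro z hz
      rcases List.mem_map.1 (List.mem_toFinset.1 hz) with ⟨y, hy, rfl⟩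
      exact List.mem_toFinset.2 ((List.mem_inits _ _).2 ((hq y u).1 ((List.mem_inits _ _).1 hy)))
    have h1 : (u.inits.map q).toFinset.card = u.length + 1 := by
      rw [List.toFinset_card_of_nodup ((nodup_inits u).map q.injective)]
      rw [List.length_map, List.length_inits]
    have h2 : (q u).inits.toFinset.card = (q u).length + 1 := by
      rw [List.toFinset_card_of_nodup (nodup_inits _), List.length_inits]
    have := Finset.card_le_card hsub
    omega
  have h1 := key p hp w
  have h2 := key p⁻¹ ((treeAutL X).inv_mem hp) (p w)
  rw [Equiv.Perm.inv_apply_self] at h2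
  omega

theorem prefix_eq_prefix {u z w : List X} (hu : u <+: w) (hz : z <+: w)
    (h : u.length = z.length) : u = z := by
  rcases List.prefix_or_prefix_of_prefix hu hz with h' | h'
  · exact h'.eq_of_length h
  · exact (h'.eq_of_length h.symm).symm

theorem not_prefix_of_ne {u z : List X} (h : u ≠ z) (hl : u.length = z.length) :
    ¬ u <+: z := fun hp => h (hp.eq_of_length hl)

theorem prefix_restore {v z : List X} (h : v <+: z) : v ++ z.drop v.length = z := by
  obtain ⟨t, rfl⟩ := h; rw [List.drop_left]

/-- A permutation supported on the cone above `u` maps that cone into itself. -/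
theorem cone_mapsto {u : List X} {t : Perm (List X)}
    (ht : ∀ w, ¬ u <+: w → t w = w) {w : List X} (hw : u <+: w) : u <+: t w := by
  by_contra hcon
  have h2 : t w = w := t.injective (ht _ hcon)
  exact hcon (h2.symm ▸ hw)

theorem commute_disjoint {u v : List X} {r s : Perm (List X)}
    (huv : ¬ u <+: v) (hvu : ¬ v <+: u)
    (hr : ∀ w, ¬ u <+: w → r w = w) (hs : ∀ w, ¬ v <+: w → s w = w) :
    Commute r s := by
  have disj : ∀ w : List X, u <+: w → ¬ v <+: w := by
    intro w hw hv'
    rcases List.prefix_or_prefix_of_prefix hw hv' with h | h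
    exacts [huv h, hvu h]
  have disj' : ∀ w : List X, v <+: w → ¬ u <+: w := by
    intro w hw hv'
    rcases List.prefix_or_prefix_of_prefix hw hv' with h | h
    exacts [hvu h, huv h]
  show r * s = s * r
  apply Equiv.ext
  intro w
  simp only [Equiv.Perm.mul_apply]
  by_cases h1 : u <+: w
  · rw [hs w (disj w h1), hs (r w) (disj _ (cone_mapsto hr h1))]
  · by_cases h2 : v <+: w
    · rw [hr w h1, hr (s w) (disj' _ (cone_mapsto hs h2))]
    · rw [hr w h1, hs w h2, hr w h1]

theorem conj_rist_supp {g r : Perm (List X)} (hg : g ∈ treeAutL X) {u : List X}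
    (hr : ∀ w, ¬ u <+: w → r w = w) :
    ∀ w, ¬ (g u) <+: w → (g * r * g⁻¹) w = w := by
  intro w hw
  have h1 : ¬ u <+: g⁻¹ w := by
    intro hc
    have := (hg u (g⁻¹ w)).1 hc
    rw [Equiv.Perm.apply_inv_self] at this
    exact hw this
  simp only [Equiv.Perm.mul_apply, hr _ h1, Equiv.Perm.apply_inv_self]

/-! ### The tree extension `rho v k` of a permutation `k` acting on the cone above `v` -/

open Classical in
/-- The permutation acting as `k` on the subtree at `v` and trivially elsewhere. -/
noncomputable def rho (v : List X) (k : Perm (List X)) : Perm (List X) where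
  toFun w := if v <+: w then v ++ k (w.drop v.length) else w
  invFun w := if v <+: w then v ++ k⁻¹ (w.drop v.length) else w
  left_inv := by
    intro w
    dsimp only
    by_cases h : v <+: w
    · rw [if_pos h, if_pos (List.prefix_append v _), List.drop_left,
        Equiv.Perm.inv_apply_self, prefix_restore h]
    · rw [if_neg h, if_neg h]
  right_inv := by
    intro w
    dsimp only
    by_cases h : v <+: w
    · rw [if_pos h, if_pos (List.prefix_append v _), List.drop_left,
        Equiv.Perm.apply_inv_self, prefix_restore h]
    · rw [if_neg h, if_neg h]

open Classical in
theorem rho_def (v w : List X) (k : Perm (List X)) :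
    rho v k w = if v <+: w then v ++ k (w.drop v.length) else w := rfl

theorem rho_apply_of_prefix {v w : List X} (h : v <+: w) (k : Perm (List X)) :
    rho v k w = v ++ k (w.drop v.length) := by
  rw [rho_def, if_pos h]

theorem rho_apply_append (v t : List X) (k : Perm (List X)) :
    rho v k (v ++ t) = v ++ k t := by
  rw [rho_apply_of_prefix (List.prefix_append v t), List.drop_left]

theorem rho_apply_of_not_prefix {v w : List X} (h : ¬ v <+: w) (k : Perm (List X)) :
    rho v k w = w := by
  rw [rho_def, if_neg h]

theorem rho_mul (v : List X) (k k' : Perm (List X)) :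
    rho v (k * k') = rho v k * rho v k' := by
  apply Equiv.ext
  intro w
  simp only [Equiv.Perm.mul_apply]
  by_cases h : v <+: w
  · rw [rho_apply_of_prefix h, rho_apply_of_prefix h, rho_apply_append,
      Equiv.Perm.mul_apply]
  · rw [rho_apply_of_not_prefix h, rho_apply_of_not_prefix h, rho_apply_of_not_prefix h]

/-- `rho v` as a group homomorphism. -/
noncomputable def rhoHom (v : List X) : Perm (List X) →* Perm (List X) :=
  MonoidHom.mk' (rho v) (rho_mul v)

theorem rho_nil (k : Perm (List X)) : rho ([] : List X) k = k := by
  apply Equiv.ext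
  intro w
  rw [rho_apply_of_prefix (List.nil_prefix) k]
  simp

theorem rho_cons (x : X) (v : List X) (k : Perm (List X)) :
    rho (x :: v) k = rho [x] (rho v k) := by
  apply Equiv.ext
  intro w
  by_cases h : (x :: v) <+: w
  · obtain ⟨t, rfl⟩ := h
    have hx : [x] <+: x :: v ++ t := ⟨v ++ t, by simp⟩
    rw [show (x :: v) ++ t = (x :: v) ++ t from rfl, rho_apply_append]
    rw [rho_apply_of_prefix hx]
    have hd : (x :: v ++ t).drop ([x] : List X).length = v ++ t := by simp
    rw [hd, rho_apply_append]
    simp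
  · rw [rho_apply_of_not_prefix h]
    by_cases h2 : [x] <+: w
    · obtain ⟨t, rfl⟩ := h2
      have hvt : ¬ v <+: t := by
        intro hc
        exact h (by simpa [List.cons_prefix_cons] using hc)
      rw [rho_apply_of_prefix (List.prefix_append [x] t)]
      have hd : (([x] : List X) ++ t).drop ([x] : List X).length = t := List.drop_left
      rw [hd, rho_apply_of_not_prefix hvt]
    · rw [rho_apply_of_not_prefix h2]

end Aux
section Aux2

variable {X : Type}

/-! ### Sections of tree automorphisms at fixed vertices -/

/-- The section of `p` at `v`, as a function. -/
def secFun (p : Perm (List X)) (v : List X) : List X → List X :=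
  fun w => (p (v ++ w)).drop v.length

theorem sec_pre {p : Perm (List X)} (hp : p ∈ treeAutL X) {v : List X} (hv : p v = v)
    (w : List X) : v <+: p (v ++ w) := by
  have := (hp v (v ++ w)).1 (List.prefix_append v w)
  rwa [hv] at this

theorem secFun_section {p : Perm (List X)} (hp : p ∈ treeAutL X) {v : List X}
    (hv : p v = v) (w : List X) : p (v ++ w) = v ++ secFun p v w :=
  (prefix_restore (sec_pre hp hv w)).symm

/-- The section of `p` at `v`, as a permutation. -/
def secPerm (p : Perm (List X)) (v : List X) (hp : p ∈ treeAutL X) (hv : p v = v) :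
    Perm (List X) where
  toFun := secFun p v
  invFun := secFun p⁻¹ v
  left_inv := by
    intro w
    have hv' : p⁻¹ v = v := by conv_lhs => rw [← hv, Equiv.Perm.inv_apply_self]
    show (p⁻¹ (v ++ (p (v ++ w)).drop v.length)).drop v.length = w
    rw [prefix_restore (sec_pre hp hv w), Equiv.Perm.inv_apply_self, List.drop_left]
  right_inv := by
    intro w
    have hp' : p⁻¹ ∈ treeAutL X := (treeAutL X).inv_mem hp
    have hv' : p⁻¹ v = v := by conv_lhs => rw [← hv, Equiv.Perm.inv_apply_self]
    show (p (v ++ (p⁻¹ (v ++ w)).drop v.length)).drop v.length = w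
    rw [prefix_restore (sec_pre hp' hv' w), Equiv.Perm.apply_inv_self, List.drop_left]

theorem secPerm_apply (p : Perm (List X)) (v : List X) (hp : p ∈ treeAutL X)
    (hv : p v = v) (w : List X) : secPerm p v hp hv w = (p (v ++ w)).drop v.length := rfl

theorem secPerm_section {p : Perm (List X)} {v : List X} (hp : p ∈ treeAutL X)
    (hv : p v = v) (w : List X) : p (v ++ w) = v ++ secPerm p v hp hv w :=
  secFun_section hp hv w

theorem secPerm_mul {p q : Perm (List X)} {v : List X} (hp : p ∈ treeAutL X)
    (hq : q ∈ treeAutL X) (hv : p v = v) (hv' : q v = v) :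
    secPerm (p * q) v ((treeAutL X).mul_mem hp hq)
        (by rw [Equiv.Perm.mul_apply, hv', hv]) =
      secPerm p v hp hv * secPerm q v hq hv' := by
  apply Equiv.ext
  intro w
  show secFun (p * q) v w = secFun p v (secFun q v w)
  have h1 : (p * q) (v ++ w) = v ++ secFun p v (secFun q v w) := by
    rw [Equiv.Perm.mul_apply, secFun_section hq hv' w, secFun_section hp hv]
  show ((p * q) (v ++ w)).drop v.length = _
  rw [h1, List.drop_left]

/-- `rho v k` agrees with `p` on the cone over `v` whenever `k` is the section of
`p` at `v`. -/
theorem rho_secPerm_agree {p : Perm (List X)} {v : List X} (hp : p ∈ treeAutL X)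
    (hv : p v = v) {w : List X} (hw : v <+: w) :
    rho v (secPerm p v hp hv) w = p w := by
  rw [rho_apply_of_prefix hw, secPerm_apply]
  conv_rhs => rw [← prefix_restore hw]
  exact prefix_restore (sec_pre hp hv _)

/-! ### `rho` and rigid stabilisers of the regular branch subgroup -/

theorem rho_single_mem {K : Subgroup (Perm (List X))}
    (hreg : ∀ x : X, K ≤ projL X [x] (ristL X K [x])) (x : X) {k : Perm (List X)}
    (hk : k ∈ K) : rho [x] k ∈ ristL X K [x] := by
  obtain ⟨g, hg, hsec⟩ := hreg x hk
  have : g = rho [x] k := by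
    apply Equiv.ext
    intro w
    by_cases h : [x] <+: w
    · obtain ⟨t, rfl⟩ := h
      rw [hsec t, rho_apply_append]
    · rw [(mem_ristL.1 hg).2 w h, rho_apply_of_not_prefix h]
  rw [← this]
  exact hg

theorem rho_mem_rist {K : Subgroup (Perm (List X))}
    (hreg : ∀ x : X, K ≤ projL X [x] (ristL X K [x])) (v : List X) {k : Perm (List X)}
    (hk : k ∈ K) : rho v k ∈ ristL X K v := by
  induction v generalizing k with
  | nil =>
    rw [rho_nil]
    exact ⟨hk, fun w hw => absurd (List.nil_prefix) hw⟩
  | cons x v ih =>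
    rw [rho_cons]
    have h1 : rho v k ∈ ristL X K v := ih hk
    have h2 : rho [x] (rho v k) ∈ ristL X K [x] := rho_single_mem hreg x h1.1
    refine ⟨h2.1, fun w hw => ?_⟩
    by_cases hx : [x] <+: w
    · obtain ⟨t, rfl⟩ := hx
      have hvt : ¬ v <+: t := by
        intro hc
        exact hw (by simpa [List.cons_prefix_cons] using hc)
      rw [rho_apply_append, h1.2 t hvt]
    · rw [rho_apply_of_not_prefix hx]

theorem rho_mem_K {K : Subgroup (Perm (List X))}
    (hreg : ∀ x : X, K ≤ projL X [x] (ristL X K [x])) (v : List X) {k : Perm (List X)}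
    (hk : k ∈ K) : rho v k ∈ K := (rho_mem_rist hreg v hk).1

/-! ### Level stabilisers -/

/-- The pointwise stabiliser of the `n`-th level. -/
def levelStab (n : ℕ) : Subgroup (Perm (List X)) where
  carrier := {g | ∀ v : List X, v.length = n → g v = v}
  one_mem' := fun _ _ => rfl
  mul_mem' := by
    intro a b ha hb v hv
    show a (b v) = v
    rw [hb v hv, ha v hv]
  inv_mem' := by
    intro a ha v hv
    show a⁻¹ v = v
    conv_lhs => rw [← ha v hv, Equiv.Perm.inv_apply_self]

theorem mem_levelStab {n : ℕ} {p : Perm (List X)} :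
    p ∈ (levelStab n : Subgroup (Perm (List X))) ↔
      ∀ v : List X, v.length = n → p v = v := Iff.rfl

end Aux2
section Aux3

variable {X : Type}

/-- In a regular weakly branch situation, `K` is not abelian: it contains a
non-trivial commutator. -/
theorem exists_commutator_ne_one {G K : Subgroup (Perm (List X))}
    (hGtree : G ≤ treeAutL X) (hKG : K ≤ G)
    (hreg : ∀ x : X, K ≤ projL X [x] (ristL X K [x])) (hKbot : K ≠ ⊥) :
    ∃ r s : Perm (List X), r ∈ K ∧ s ∈ K ∧ ⁅r, s⁆ ≠ 1 := by
  obtain ⟨⟨k, hkK⟩, hk1⟩ := Subgroup.ne_bot_iff_exists_ne_one.1 hKbot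
  have hk1' : k ≠ 1 := by
    intro h; exact hk1 (Subtype.ext h)
  have hktree : k ∈ treeAutL X := hGtree (hKG hkK)
  obtain ⟨u, hu⟩ : ∃ u : List X, k u ≠ u := by
    by_contra hcon
    push_neg at hcon
    exact hk1' (Equiv.ext hcon)
  set r := rho u k with hr
  have hrrist : r ∈ ristL X K u := rho_mem_rist hreg u hkK
  refine ⟨k, r, hkK, hrrist.1, ?_⟩
  intro hcomm
  have hC : Commute k r := commutatorElement_eq_one_iff_commute.1 hcomm
  have hconj : k * r * k⁻¹ = r := by
    rw [hC.eq]; exact mul_inv_cancel_right r k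
  have hlen : (k u).length = u.length := length_apply hktree u
  have hnp : ¬ (k u) <+: (u ++ u) := by
    intro hc
    exact hu (prefix_eq_prefix hc (List.prefix_append u u) (by rw [hlen]))
  have h1 : (k * r * k⁻¹) (u ++ u) = u ++ u :=
    conj_rist_supp hktree hrrist.2 (u ++ u) hnp
  rw [hconj] at h1
  rw [hr, rho_apply_append] at h1
  exact hu (List.append_cancel_left h1)

/-- Every non-trivial subgroup of `G` that is normal in `G` contains, for some level
`n`, all `rho v k` with `|v| = n` and `k ∈ [K,K]`. -/
theorem exists_level {G K Np : Subgroup (Perm (List X))}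
    (hGtree : G ≤ treeAutL X) (hsph : SphTransL X G) (hKG : K ≤ G)
    (hKnorm : ∀ g ∈ G, ∀ k ∈ K, g * k * g⁻¹ ∈ K)
    (hreg : ∀ x : X, K ≤ projL X [x] (ristL X K [x]))
    (hNG : Np ≤ G) (hNnorm : ∀ g ∈ G, ∀ m ∈ Np, g * m * g⁻¹ ∈ Np)
    (hNbot : Np ≠ ⊥) :
    ∃ n : ℕ, ∀ v : List X, v.length = n → ∀ k ∈ ⁅K, K⁆, rho v k ∈ Np := by
  obtain ⟨⟨g₀, hg₀N⟩, hg₀1⟩ := Subgroup.ne_bot_iff_exists_ne_one.1 hNbot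
  have hg₀1' : g₀ ≠ 1 := fun h => hg₀1 (Subtype.ext h)
  have hg₀G : g₀ ∈ G := hNG hg₀N
  have hg₀tree : g₀ ∈ treeAutL X := hGtree hg₀G
  obtain ⟨u, hu⟩ : ∃ u : List X, g₀ u ≠ u := by
    by_contra hcon
    push_neg at hcon
    exact hg₀1' (Equiv.ext hcon)
  have hlen : (g₀ u).length = u.length := length_apply hg₀tree u
  have hinc1 : ¬ u <+: g₀ u := not_prefix_of_ne (fun h => hu h.symm) hlen.symm
  have hinc2 : ¬ g₀ u <+: u := not_prefix_of_ne hu hlen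
  -- commutators of the rigid stabiliser of `u` in `K` lie in `Np`
  have key : ∀ r s : Perm (List X), r ∈ ristL X K u → s ∈ ristL X K u →
      ⁅r, s⁆ ∈ Np := by
    have key' : ∀ r s : Perm (List X), r ∈ ristL X K u → s ∈ ristL X K u →
        r⁻¹ * s * r * s⁻¹ ∈ Np := by
      intro r s hr hs
      have hrG : r ∈ G := hKG hr.1
      have hsG : s ∈ G := hKG hs.1
      set a := g₀ * r * g₀⁻¹ with ha
      have hasupp : ∀ w, ¬ (g₀ u) <+: w → a w = w := conj_rist_supp hg₀tree hr.2
      have car : Commute a r := commute_disjoint hinc2 hinc1 hasupp hr.2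
      have cas : Commute a s := commute_disjoint hinc2 hinc1 hasupp hs.2
      have hc1 : ⁅g₀, r⁆ ∈ Np := by
        rw [commutatorElement_def]
        have he : g₀ * r * g₀⁻¹ * r⁻¹ = g₀ * (r * g₀ * r⁻¹)⁻¹ := by group
        rw [he]
        exact Np.mul_mem hg₀N (Np.inv_mem (hNnorm r hrG g₀ hg₀N))
      have hc2 : ⁅⁅g₀, r⁆, s⁆ ∈ Np := by
        rw [commutatorElement_def ⁅g₀, r⁆ s]
        have he : ⁅g₀, r⁆ * s * ⁅g₀, r⁆⁻¹ * s⁻¹ = ⁅g₀, r⁆ * (s * ⁅g₀, r⁆ * s⁻¹)⁻¹ := by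
          group
        rw [he]
        exact Np.mul_mem hc1 (Np.inv_mem (hNnorm s hsG _ hc1))
      have hcom : Commute a (r⁻¹ * s * r) := (car.inv_right.mul_right cas).mul_right car
      have hx : a * (r⁻¹ * s * r) * a⁻¹ = r⁻¹ * s * r := by
        rw [hcom.eq]; exact mul_inv_cancel_right _ _
      have hid : ⁅⁅g₀, r⁆, s⁆ = r⁻¹ * s * r * s⁻¹ := by
        rw [commutatorElement_def ⁅g₀, r⁆ s, commutatorElement_def g₀ r, ← hx, ha]
        group
      rw [← hid]
      exact hc2
    intro r s hr hs
    have h0 := key' r⁻¹ s ((ristL X K u).inv_mem hr) hs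
    rw [inv_inv] at h0
    rw [commutatorElement_def]
    exact h0
  -- transport to every vertex of level `u.length` using spherical transitivity
  refine ⟨u.length, fun v hv k hk => ?_⟩
  obtain ⟨h, hhG, hhu⟩ := hsph u v hv.symm
  have hhtree : h ∈ treeAutL X := hGtree hhG
  have hhinv : h⁻¹ v = u := by rw [← hhu, Equiv.Perm.inv_apply_self]
  -- conjugating `rho v k'` by `h⁻¹` lands in the rigid stabiliser of `u`
  have conj_mem : ∀ k' : Perm (List X), k' ∈ K →
      h⁻¹ * rho v k' * h ∈ ristL X K u := by
    intro k' hk'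
    have h1 : rho v k' ∈ ristL X K v := rho_mem_rist hreg v hk'
    constructor
    · have := hKnorm h⁻¹ (G.inv_mem hhG) (rho v k') h1.1
      rwa [inv_inv] at this
    · have := conj_rist_supp ((treeAutL X).inv_mem hhtree) h1.2
      rw [inv_inv, hhinv] at this
      exact this
  -- the subgroup of elements whose `rho v`-conjugate lies in `Np`
  set C : Subgroup (Perm (List X)) :=
    Subgroup.comap ((MulAut.conj h⁻¹).toMonoidHom.comp (rhoHom v)) Np with hC
  have hKKC : ⁅K, K⁆ ≤ C := by
    rw [Subgroup.commutator_le]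
    intro k₁ hk₁ k₂ hk₂
    rw [hC, Subgroup.mem_comap, map_commutatorElement]
    have e : ∀ k' : Perm (List X),
        ((MulAut.conj h⁻¹).toMonoidHom.comp (rhoHom v)) k' = h⁻¹ * rho v k' * h := by
      intro k'
      show (MulAut.conj h⁻¹) (rho v k') = _
      rw [MulAut.conj_apply, inv_inv]
    rw [e k₁, e k₂]
    exact key _ _ (conj_mem k₁ hk₁) (conj_mem k₂ hk₂)
  have hmemC : k ∈ C := hKKC hk
  rw [hC, Subgroup.mem_comap] at hmemC
  have hmemC' : h⁻¹ * rho v k * h ∈ Np := by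
    have e : ((MulAut.conj h⁻¹).toMonoidHom.comp (rhoHom v)) k = h⁻¹ * rho v k * h := by
      show (MulAut.conj h⁻¹) (rho v k) = _
      rw [MulAut.conj_apply, inv_inv]
    rwa [e] at hmemC
  have := hNnorm h hhG _ hmemC'
  have e2 : h * (h⁻¹ * rho v k * h) * h⁻¹ = rho v k := by group
  rwa [e2] at this

end Aux3
section Aux4

variable {X : Type}

/-- Gluing: given local pieces in `Np` agreeing with `p` on the cones over a list of
level-`n` vertices, some element of `Np` agrees with `p` on all those cones and is
trivial elsewhere. -/
theorem glue {Np : Subgroup (Perm (List X))} {n : ℕ} {p : Perm (List X)}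
    (hptree : p ∈ treeAutL X) (hpfix : ∀ v : List X, v.length = n → p v = v)
    (hsec : ∀ v : List X, v.length = n → ∃ h ∈ Np,
      (∀ w, ¬ v <+: w → h w = w) ∧ (∀ w, v <+: w → h w = p w)) :
    ∀ L : List (List X), L.Nodup → (∀ v ∈ L, v.length = n) →
      ∃ h ∈ Np, (∀ w, (∃ v ∈ L, v <+: w) → h w = p w) ∧
        (∀ w, ¬ (∃ v ∈ L, v <+: w) → h w = w) := by
  intro L
  induction L with
  | nil =>
    intro _ _
    exact ⟨1, Np.one_mem, fun w hw => by simp at hw, fun w _ => rfl⟩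
  | cons v L' ih =>
    intro hnd hlen
    obtain ⟨hvL', hnd'⟩ := List.nodup_cons.1 hnd
    obtain ⟨h', hh'N, hh'1, hh'2⟩ := ih hnd' (fun z hz => hlen z (List.mem_cons_of_mem v hz))
    obtain ⟨hv, hvN, hvs, hvp⟩ := hsec v (hlen v (List.mem_cons_self))
    refine ⟨hv * h', Np.mul_mem hvN hh'N, ?_, ?_⟩
    · intro w hw
      obtain ⟨z, hzL, hzw⟩ := hw
      rcases List.mem_cons.1 hzL with rfl | hzL'
      · -- `z = v` is a prefix of `w`
        have hnone : ¬ ∃ z' ∈ L', z' <+: w := by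
          rintro ⟨z', hz'1, hz'2⟩
          have : z' = z := prefix_eq_prefix hz'2 hzw
            (by rw [hlen z' (List.mem_cons_of_mem z hz'1),
                    hlen z (List.mem_cons_self)])
          exact hvL' (this ▸ hz'1)
        show hv (h' w) = p w
        rw [hh'2 w hnone, hvp w hzw]
      · -- `z ∈ L'`, so `v` is not a prefix of `w` nor of `p w`
        have hvw : ¬ v <+: w := by
          intro hc
          have : v = z := prefix_eq_prefix hc hzw
            (by rw [hlen v (List.mem_cons_self),
                    hlen z (List.mem_cons_of_mem v hzL')])
          exact hvL' (this ▸ hzL')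
        have hzn : z.length = n := hlen z (List.mem_cons_of_mem v hzL')
        have hzpw : z <+: p w := by
          have := (hptree z w).1 hzw
          rwa [hpfix z hzn] at this
        have hvpw : ¬ v <+: p w := by
          intro hc
          have : v = z := prefix_eq_prefix hc hzpw
            (by rw [hlen v (List.mem_cons_self), hzn])
          exact hvL' (this ▸ hzL')
        show hv (h' w) = p w
        rw [hh'1 w ⟨z, hzL', hzw⟩, hvs _ hvpw]
    · intro w hw
      have h1 : ¬ ∃ z ∈ L', z <+: w := by
        rintro ⟨z, hz1, hz2⟩
        exact hw ⟨z, List.mem_cons_of_mem v hz1, hz2⟩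
      have h2 : ¬ v <+: w := fun hc => hw ⟨v, List.mem_cons_self, hc⟩
      show hv (h' w) = w
      rw [hh'2 w h1, hvs w h2]

/-- If `p ∈ Aut(X*)` fixes level `n` and all its local pieces at level `n` lie in
`Np`, then `p ∈ Np`. -/
theorem perm_mem_of_sections [Fintype X] (hXne : Nonempty X)
    {Np : Subgroup (Perm (List X))} {n : ℕ}
    {p : Perm (List X)} (hptree : p ∈ treeAutL X)
    (hpfix : ∀ v : List X, v.length = n → p v = v)
    (hsec : ∀ v : List X, v.length = n → ∃ h ∈ Np,
      (∀ w, ¬ v <+: w → h w = w) ∧ (∀ w, v <+: w → h w = p w)) :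
    p ∈ Np := by
  classical
  obtain ⟨x₀⟩ := hXne
  set L : List (List X) :=
    ((Finset.univ : Finset (List.Vector X n)).toList).map
      (fun z : List.Vector X n => z.toList) with hL
  have hnd : L.Nodup := by
    refine (Finset.nodup_toList _).map ?_
    intro a b hab
    exact Subtype.ext hab
  have hmem : ∀ v : List X, v.length = n → v ∈ L := by
    intro v hv
    rw [hL]
    exact List.mem_map.2 ⟨⟨v, hv⟩, Finset.mem_toList.2 (Finset.mem_univ _), rfl⟩
  have hlen : ∀ v ∈ L, v.length = n := by
    intro v hvL
    rw [hL] at hvL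
    obtain ⟨z, _, rfl⟩ := List.mem_map.1 hvL
    exact z.toList_length
  obtain ⟨h, hhN, h1, h2⟩ := glue hptree hpfix hsec L hnd hlen
  have : p = h := by
    apply Equiv.ext
    intro w
    by_cases hw : n ≤ w.length
    · have hex : ∃ v ∈ L, v <+: w := by
        refine ⟨w.take n, hmem _ ?_, List.take_prefix n w⟩
        rw [List.length_take]
        omega
      exact (h1 w hex).symm
    · push_neg at hw
      have hnoex : ¬ ∃ v ∈ L, v <+: w := by
        rintro ⟨v, hvL, hvw⟩
        have := hvw.length_le
        rw [hlen v hvL] at this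
        omega
      rw [h2 w hnoex]
      -- `p` fixes words of length `< n`
      set z : List X := w ++ List.replicate (n - w.length) x₀ with hz
      have hzlen : z.length = n := by
        rw [hz, List.length_append, List.length_replicate]
        omega
      have hwz : w <+: z := List.prefix_append w _
      have hpwz : p w <+: z := by
        have := (hptree w z).1 hwz
        rwa [hpfix z hzlen] at this
      exact prefix_eq_prefix hpwz hwz (length_apply hptree w)
  rw [this]
  exact hhN

end Aux4
section Aux5

variable {X : Type}

/-- The derived subgroup of a subgroup normal in `G` gives a normal subgroup of `↥G`. -/
theorem Kp_normal {G K : Subgroup (Perm (List X))} (hKG : K ≤ G)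
    (hnorm : ∀ g ∈ G, ∀ k ∈ K, g * k * g⁻¹ ∈ K) :
    ((⁅K, K⁆ : Subgroup (Perm (List X))).subgroupOf G).Normal := by
  have key : ∀ g ∈ G, ∀ x ∈ (⁅K, K⁆ : Subgroup (Perm (List X))),
      g * x * g⁻¹ ∈ (⁅K, K⁆ : Subgroup (Perm (List X))) := by
    intro g hg
    have hle : (⁅K, K⁆ : Subgroup (Perm (List X))) ≤
        Subgroup.comap (MulAut.conj g).toMonoidHom ⁅K, K⁆ := by
      rw [Subgroup.commutator_le]
      intro k₁ h₁ k₂ h₂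
      rw [Subgroup.mem_comap, map_commutatorElement]
      refine Subgroup.commutator_mem_commutator ?_ ?_
      · show (MulAut.conj g) k₁ ∈ K
        rw [MulAut.conj_apply]
        exact hnorm g hg k₁ h₁
      · show (MulAut.conj g) k₂ ∈ K
        rw [MulAut.conj_apply]
        exact hnorm g hg k₂ h₂
    intro x hx
    have hh := hle hx
    rw [Subgroup.mem_comap] at hh
    have he : (MulAut.conj g).toMonoidHom x = g * x * g⁻¹ := by
      show (MulAut.conj g) x = _
      rw [MulAut.conj_apply]
    rwa [he] at hh
  constructor
  intro m hm g
  rw [Subgroup.mem_subgroupOf] at hm ⊢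
  have := key g.1 g.2 m.1 hm
  simpa using this

end Aux5

/-- Let `G ≤ Aut(X*)` be a regular weakly branch group over a
normal subgroup `K`, and let `𝒫` be a class of groups closed under isomorphism,
finite direct products, quotients and subgroups. Then every proper quotient of
`G` is virtually `𝒫` if and only if `G/K'` is virtually `𝒫`. -/
theorem proper_quotients_virtually_iff
    (X : Type) [Fintype X] (hX : 2 ≤ Fintype.card X)
    (G K : Subgroup (Perm (List X)))
    (hWB : IsWeaklyBranchL X G) (hSS : SelfSimilarL X G)
    (hKG : K ≤ G) (hKnorm : NormalIn K G) (hKbot : K ≠ ⊥)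
    (hreg : ∀ x : X, K ≤ projL X [x] (ristL X K [x]))
    (P : ∀ (Γ : Type) [Group Γ], Prop)
    (hiso : ∀ (Γ Δ : Type) [Group Γ] [Group Δ], Nonempty (Γ ≃* Δ) → P Γ → P Δ)
    (hprod : ∀ (ι : Type) [Fintype ι] (f : ι → Type) [∀ i, Group (f i)],
      (∀ i, P (f i)) → P (∀ i, f i))
    (hquot : ∀ (Γ : Type) [Group Γ] (N : Subgroup Γ) [N.Normal], P Γ → P (Γ ⧸ N))
    (hsub : ∀ (Γ : Type) [Group Γ] (H : Subgroup Γ), P Γ → P ↥H) :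
    (∀ (N : Subgroup ↥G) [N.Normal], N ≠ ⊥ →
        ∃ H : Subgroup (↥G ⧸ N), H.index ≠ 0 ∧ P ↥H) ↔
      (∀ [inst : ((⁅K, K⁆ : Subgroup (Perm (List X))).subgroupOf G).Normal],
        ∃ H : Subgroup (↥G ⧸ (⁅K, K⁆ : Subgroup (Perm (List X))).subgroupOf G),
          H.index ≠ 0 ∧ P ↥H) := by
  classical
  obtain ⟨hGtree, hsph, hrist⟩ := hWB
  constructor
  · -- forward direction
    intro hL inst
    obtain ⟨r, s, hrK, hsK, hne⟩ := exists_commutator_ne_one hGtree hKG hreg hKbot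
    have hmemKK : ⁅r, s⁆ ∈ (⁅K, K⁆ : Subgroup (Perm (List X))) :=
      Subgroup.commutator_mem_commutator hrK hsK
    have hmemK : ⁅r, s⁆ ∈ K := by
      rw [commutatorElement_def]
      exact K.mul_mem (K.mul_mem (K.mul_mem hrK hsK) (K.inv_mem hrK)) (K.inv_mem hsK)
    have hbot : (⁅K, K⁆ : Subgroup (Perm (List X))).subgroupOf G ≠ ⊥ := by
      intro hc
      have hmem : (⟨⁅r, s⁆, hKG hmemK⟩ : ↥G) ∈
          (⁅K, K⁆ : Subgroup (Perm (List X))).subgroupOf G :=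
        Subgroup.mem_subgroupOf.2 hmemKK
      rw [hc, Subgroup.mem_bot] at hmem
      exact hne (congrArg Subtype.val hmem)
    exact hL _ hbot
  · -- backward direction
    intro hR N instN hNbot
    haveI instKp : ((⁅K, K⁆ : Subgroup (Perm (List X))).subgroupOf G).Normal :=
      Kp_normal hKG hKnorm.2
    obtain ⟨H, hHidx, hHP⟩ := hR
    haveI : H.FiniteIndex := ⟨hHidx⟩
    -- push `N` down to the permutation group
    set Np : Subgroup (Perm (List X)) := N.map G.subtype with hNpdef
    have hNpG : Np ≤ G := Subgroup.map_subtype_le N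
    have hNpnorm : ∀ g ∈ G, ∀ m ∈ Np, g * m * g⁻¹ ∈ Np := by
      rintro g hg m ⟨y, hyN, rfl⟩
      exact ⟨(⟨g, hg⟩ : ↥G) * y * (⟨g, hg⟩ : ↥G)⁻¹, instN.conj_mem y hyN _, rfl⟩
    have hNpbot : Np ≠ ⊥ := by
      obtain ⟨a, ha1⟩ := Subgroup.ne_bot_iff_exists_ne_one.1 hNbot
      intro hc
      have hmem : ((a : ↥G) : Perm (List X)) ∈ Np := ⟨a.1, a.2, rfl⟩
      rw [hc, Subgroup.mem_bot] at hmem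
      exact ha1 (Subtype.ext (Subtype.ext hmem))
    obtain ⟨n, hlevel⟩ :=
      exists_level hGtree hsph hKG hKnorm.2 hreg hNpG hNpnorm hNpbot
    haveI hVfin : Fintype {v : List X // v.length = n} :=
      Fintype.ofEquiv (List.Vector X n) (Equiv.refl _)
    have hXne : Nonempty X := Fintype.card_pos_iff.1 (by omega)
    -- the `n`-th level stabiliser in `G` has finite index
    set SG : Subgroup ↥G := (levelStab n : Subgroup (Perm (List X))).subgroupOf G with hSG
    let α : ↥G →* Equiv.Perm {v : List X // v.length = n} :=
      MonoidHom.mk' (fun g =>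
        { toFun := fun v => ⟨(g : Perm (List X)) v.1, by
            rw [length_apply (hGtree g.2) v.1]; exact v.2⟩
          invFun := fun v => ⟨((g : Perm (List X)))⁻¹ v.1, by
            rw [length_apply ((treeAutL X).inv_mem (hGtree g.2)) v.1]; exact v.2⟩
          left_inv := fun v => Subtype.ext (Equiv.Perm.inv_apply_self _ _)
          right_inv := fun v => Subtype.ext (Equiv.Perm.apply_inv_self _ _) })
        (fun a b => Equiv.ext fun v => Subtype.ext rfl)
    have hker : α.ker = SG := by
      ext g
      rw [MonoidHom.mem_ker, hSG, Subgroup.mem_subgroupOf]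
      constructor
      · intro hg
        show ∀ v : List X, v.length = n → (g : Perm (List X)) v = v
        intro v hv
        exact Subtype.ext_iff.1 (Equiv.ext_iff.1 hg ⟨v, hv⟩)
      · intro hg
        apply Equiv.ext
        intro v
        exact Subtype.ext (hg v.1 v.2)
    have hSGidx : SG.index ≠ 0 := by
      rw [← hker, Subgroup.index_ker]
      exact Nat.card_ne_zero.2 ⟨⟨1⟩, inferInstance⟩
    -- levelwise fixing and sections
    have hfixlev : ∀ g : ↥SG, ∀ v : List X, v.length = n →
        ((g : ↥G) : Perm (List X)) v = v := by
      intro g v hv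
      have h2 : ((g : ↥G) : Perm (List X)) ∈ (levelStab n : Subgroup (Perm (List X))) :=
        Subgroup.mem_subgroupOf.1 g.2
      exact h2 v hv
    have hsecmem : ∀ g : ↥SG, ∀ v : {v : List X // v.length = n},
        secPerm ((g : ↥G) : Perm (List X)) v.1 (hGtree (g : ↥G).2)
          (hfixlev g v.1 v.2) ∈ G :=
      fun g v => hSS v.1 ⟨_, (g : ↥G).2,
        secPerm_section (hGtree (g : ↥G).2) (hfixlev g v.1 v.2)⟩
    -- the homomorphism recording all level-`n` sections mod `K'`
    let Ψ : ↥SG →* ({v : List X // v.length = n} →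
        ↥G ⧸ (⁅K, K⁆ : Subgroup (Perm (List X))).subgroupOf G) :=
      MonoidHom.mk' (fun g => fun v => QuotientGroup.mk
        (⟨secPerm _ v.1 (hGtree (g : ↥G).2) (hfixlev g v.1 v.2), hsecmem g v⟩ : ↥G))
        (by
          intro a b
          funext v
          show (QuotientGroup.mk _ : ↥G ⧸ (⁅K, K⁆ : Subgroup (Perm (List X))).subgroupOf G) =
            (QuotientGroup.mk _ : ↥G ⧸ (⁅K, K⁆ : Subgroup (Perm (List X))).subgroupOf G) *
            (QuotientGroup.mk _ : ↥G ⧸ (⁅K, K⁆ : Subgroup (Perm (List X))).subgroupOf G)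
          rw [← QuotientGroup.mk_mul]
          apply congrArg
          apply Subtype.ext
          exact secPerm_mul (hGtree (a : ↥G).2) (hGtree (b : ↥G).2)
            (hfixlev a v.1 v.2) (hfixlev b v.1 v.2))
    -- the finite-index subgroup whose sections all lie in `H`
    let T₀ : Subgroup ↥SG := ⨅ v : {v : List X // v.length = n},
      Subgroup.comap ((Pi.evalMonoidHom
        (fun _ : {v : List X // v.length = n} =>
          ↥G ⧸ (⁅K, K⁆ : Subgroup (Perm (List X))).subgroupOf G) v).comp Ψ) H
    have hT₀idx : T₀.index ≠ 0 := by
      refine Subgroup.index_iInf_ne_zero fun v => ?_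
      rw [Subgroup.index_comap]
      exact Subgroup.FiniteIndex.index_ne_zero (H := H.subgroupOf _)
    have hT₀le : T₀.map SG.subtype ≤ SG := Subgroup.map_subtype_le T₀
    have hTidx : (T₀.map SG.subtype).index ≠ 0 := by
      have h1 : (T₀.map SG.subtype).subgroupOf SG = T₀ :=
        Subgroup.comap_map_eq_self_of_injective (Subgroup.subtype_injective SG) T₀
      have h2 := Subgroup.relIndex_mul_index hT₀le
      have h3 : (T₀.map SG.subtype).relIndex SG = T₀.index := by
        show ((T₀.map SG.subtype).subgroupOf SG).index = T₀.index
        rw [h1]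
      rw [h3] at h2
      intro hc
      rw [hc] at h2
      rcases Nat.mul_eq_zero.1 h2 with h | h
      exacts [hT₀idx h, hSGidx h]
    -- the candidate finite-index subgroup of `G ⧸ N`
    let θ : ↥T₀ →* ↥G ⧸ N := (QuotientGroup.mk' N).comp (SG.subtype.comp T₀.subtype)
    refine ⟨θ.range, ?_, ?_⟩
    · -- finite index
      have hrange : θ.range = (T₀.map SG.subtype).map (QuotientGroup.mk' N) := by
        show ((QuotientGroup.mk' N).comp (SG.subtype.comp T₀.subtype)).range = _
        rw [MonoidHom.range_comp, MonoidHom.range_comp, Subgroup.range_subtype]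
      rw [hrange]
      intro hc
      have hdvd := Subgroup.index_map_dvd (T₀.map SG.subtype)
        (QuotientGroup.mk'_surjective N)
      rw [hc] at hdvd
      exact hTidx (Nat.eq_zero_of_zero_dvd hdvd)
    · -- the subgroup lies in `𝒫`
      let HV : Subgroup ({v : List X // v.length = n} →
          ↥G ⧸ (⁅K, K⁆ : Subgroup (Perm (List X))).subgroupOf G) :=
        Subgroup.pi Set.univ fun _ => H
      have hHVP : P ↥HV := by
        refine hiso _ _ ⟨?_⟩
          (hprod {v : List X // v.length = n} (fun _ => ↥H) fun _ => hHP)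
        exact
          { toFun := fun f => ⟨fun v => (f v).1, (Subgroup.mem_pi _).2 fun v _ => (f v).2⟩
            invFun := fun h v => ⟨h.1 v, (Subgroup.mem_pi _).1 h.2 v (Set.mem_univ v)⟩
            left_inv := fun f => rfl
            right_inv := fun h => rfl
            map_mul' := fun a b => rfl }
      let ΨT : ↥T₀ →* ↥HV := MonoidHom.codRestrict (Ψ.comp T₀.subtype) HV (by
        intro t
        refine (Subgroup.mem_pi _).2 fun v _ => ?_
        have ht := Subgroup.mem_iInf.1 t.2 v
        rw [Subgroup.mem_comap] at ht
        exact ht)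
      have hkerker : ΨT.ker ≤ θ.ker := by
        intro t ht
        rw [MonoidHom.mem_ker] at ht ⊢
        have hco : ∀ v : {v : List X // v.length = n}, Ψ t.1 v = 1 := by
          intro v
          have h1 : ((ΨT t : ↥HV) : ({v : List X // v.length = n} →
              ↥G ⧸ (⁅K, K⁆ : Subgroup (Perm (List X))).subgroupOf G)) =
              ((1 : ↥HV) : _) := congrArg Subtype.val ht
          exact congrFun h1 v
        have hmemKK : ∀ v : {v : List X // v.length = n},
            secPerm ((t.1 : ↥G) : Perm (List X)) v.1 (hGtree (t.1 : ↥G).2)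
              (hfixlev t.1 v.1 v.2) ∈ (⁅K, K⁆ : Subgroup (Perm (List X))) := by
          intro v
          have h2 := (QuotientGroup.eq_one_iff
            (⟨secPerm _ v.1 (hGtree (t.1 : ↥G).2) (hfixlev t.1 v.1 v.2),
              hsecmem t.1 v⟩ : ↥G)).1 (hco v)
          exact Subgroup.mem_subgroupOf.1 h2
        have hpmem : ((t.1 : ↥G) : Perm (List X)) ∈ Np := by
          apply perm_mem_of_sections hXne (hGtree (t.1 : ↥G).2) (hfixlev t.1)
          intro v hv
          refine ⟨rho v (secPerm ((t.1 : ↥G) : Perm (List X)) v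
              (hGtree (t.1 : ↥G).2) (hfixlev t.1 v hv)), ?_, ?_, ?_⟩
          · exact hlevel v hv _ (hmemKK ⟨v, hv⟩)
          · exact fun w hw => rho_apply_of_not_prefix hw _
          · exact fun w hw => rho_secPerm_agree (hGtree (t.1 : ↥G).2)
              (hfixlev t.1 v hv) hw
        obtain ⟨y, hyN, hy⟩ := hpmem
        have hyis : y = (t.1 : ↥G) := Subtype.ext hy
        rw [hyis] at hyN
        exact (QuotientGroup.eq_one_iff _).2 hyN
      haveI hkn : ((θ.ker).map (QuotientGroup.mk' ΨT.ker)).Normal :=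
        Subgroup.Normal.map inferInstance _ (QuotientGroup.mk'_surjective _)
      have hP1 : P ↥ΨT.range := hsub _ _ hHVP
      have hP2 : P (↥T₀ ⧸ ΨT.ker) :=
        hiso _ _ ⟨(QuotientGroup.quotientKerEquivRange ΨT).symm⟩ hP1
      have hP3 : P ((↥T₀ ⧸ ΨT.ker) ⧸ (θ.ker).map (QuotientGroup.mk' ΨT.ker)) :=
        hquot _ _ hP2
      have hP4 : P (↥T₀ ⧸ θ.ker) :=
        hiso _ _ ⟨QuotientGroup.quotientQuotientEquivQuotient ΨT.ker θ.ker hkerker⟩ hP3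
      exact hiso _ _ ⟨QuotientGroup.quotientKerEquivRange θ⟩ hP4

end PaperDefs
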